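/- Let R̂ ∈ SO(3) satisfy |(R̂ − Id)e₃| ≤ δ. Then |(R̂ − Id)ᵀ e₃| ≤ Cδ and there exists Q̂ ∈ SO(2) such that the top-left 2×2 block of R̂ satisfies |R̂' − Q̂| ≤ Cδ, where C is a universal constant (for δ sufficiently small). -/

import Mathlib

open Matrix

attribute [local instance]
  Matrix.frobeniusNormedAddCommGroup Matrix.frobeniusNormedSpace

/-- Euclidean norm of a vector in `ℝ³`. -/
noncomputable def enorm3 (v : Fin 3 → ℝ) : ℝ := Real.sqrt (∑ i, (v i) ^ 2)

/-- The third coordinate vector `e₃`. -/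
def e₃ : Fin 3 → ℝ := fun i => if i = 2 then 1 else 0

/-!
Let `t = R₂₂`. The third column and the third row of `R ∈ SO(3)` are unit vectors with last
entry `t`, so `|(R − 1)e₃|² = |(R − 1)ᵀe₃|² = 2 − 2t`. Orthogonality also gives `‖R'‖² = 1 + t²`,
and since `R` is its own cofactor matrix, `det R' = t`. Hence `‖R'‖² + 2 det R' = (1 + t)²`, and
the rotation nearest to `R'` is at Frobenius distance exactly `1 − t = |(R − 1)e₃|² / 2 ≤ δ`.
-/
namespace Matrix

variable {m n : Type*} [Fintype m] [Fintype n]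

theorem frobenius_norm_sq_eq_sum (A : Matrix m n ℝ) : ‖A‖ ^ 2 = ∑ i, ∑ j, A i j ^ 2 := by
  rw [frobenius_norm_def, ← Real.sqrt_eq_rpow, Real.sq_sqrt (by positivity)]
  simp only [Real.rpow_two, Real.norm_eq_abs, sq_abs]

theorem frobenius_norm_sq_fin_two (A : Matrix (Fin 2) (Fin 2) ℝ) :
    ‖A‖ ^ 2 = A 0 0 ^ 2 + A 0 1 ^ 2 + A 1 0 ^ 2 + A 1 1 ^ 2 := by
  simp only [frobenius_norm_sq_eq_sum, Fin.sum_univ_two]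
  ring

section Orthogonal

variable [DecidableEq n] {R : Matrix n n ℝ}

theorem sum_sq_col_eq_one (hR : Rᵀ * R = 1) (j : n) : ∑ i, R i j ^ 2 = 1 := by
  simpa [mul_apply, sq] using congrFun (congrFun hR j) j

theorem sum_sq_row_eq_one (hR : Rᵀ * R = 1) (i : n) : ∑ j, R i j ^ 2 = 1 :=
  sum_sq_col_eq_one (R := Rᵀ) (by rw [transpose_transpose, mul_eq_one_comm.mp hR]) i

theorem frobenius_norm_sq_of_transpose_mul_self (hR : Rᵀ * R = 1) :
    ‖R‖ ^ 2 = Fintype.card n := by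
  simp [frobenius_norm_sq_eq_sum, Finset.sum_comm (γ := n), sum_sq_col_eq_one hR]

end Orthogonal

section TopLeftBlock

variable {n : ℕ} {R : Matrix (Fin (n + 1)) (Fin (n + 1)) ℝ}

theorem det_submatrix_castSucc_eq_apply_last (hR : Rᵀ * R = 1) (hdet : R.det = 1) :
    (R.submatrix Fin.castSucc Fin.castSucc).det = R (Fin.last n) (Fin.last n) := by
  have hadj : adjugate R = Rᵀ := by
    calc adjugate R = Rᵀ * (R * adjugate R) := by rw [← Matrix.mul_assoc, hR, Matrix.one_mul]
      _ = Rᵀ := by rw [mul_adjugate, hdet, one_smul, Matrix.mul_one]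
  have h := congrFun (congrFun hadj (Fin.last n)) (Fin.last n)
  rwa [adjugate_fin_succ_eq_det_submatrix, Fin.succAbove_last, Fin.val_last,
    Even.neg_one_pow ⟨n, rfl⟩, one_mul, transpose_apply] at h

theorem frobenius_norm_sq_submatrix_castSucc (hR : Rᵀ * R = 1) :
    ‖R.submatrix Fin.castSucc Fin.castSucc‖ ^ 2 + 1 = n + R (Fin.last n) (Fin.last n) ^ 2 := by
  have htot := frobenius_norm_sq_of_transpose_mul_self hR
  have hcol := sum_sq_col_eq_one hR (Fin.last n)
  have hrow := sum_sq_row_eq_one hR (Fin.last n)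
  rw [frobenius_norm_sq_eq_sum] at htot ⊢
  simp only [Fin.sum_univ_castSucc, Finset.sum_add_distrib, Fintype.card_fin,
    submatrix_apply] at htot hcol hrow ⊢
  push_cast at htot
  linarith

end TopLeftBlock

end Matrix

theorem transpose_mul_self_rotation {c s : ℝ} (h : c ^ 2 + s ^ 2 = 1) :
    !![c, -s; s, c]ᵀ * !![c, -s; s, c] = 1 := by
  rw [one_fin_two, ← h]
  ext i j
  fin_cases i <;> fin_cases j <;>
    simp only [Fin.zero_eta, Fin.mk_one, Fin.isValue, mul_apply, transpose_apply, of_apply,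
      cons_val', cons_val_zero, cons_val_one, cons_val_fin_one, Fin.sum_univ_two] <;> ring

/-- `Q` is the rotation nearest to `M` in the Frobenius norm: among rotations by `θ` it maximises
`tr (Qᵀ M) = p cos θ + q sin θ`, whose maximum is `√(p² + q²) = √(‖M‖² + 2 det M)`. -/
theorem exists_rotation_norm_sub_sq (M : Matrix (Fin 2) (Fin 2) ℝ)
    (hM : 0 < ‖M‖ ^ 2 + 2 * M.det) :
    ∃ Q : Matrix (Fin 2) (Fin 2) ℝ, Qᵀ * Q = 1 ∧ Q.det = 1 ∧
      ‖M - Q‖ ^ 2 = ‖M‖ ^ 2 + 2 - 2 * √(‖M‖ ^ 2 + 2 * M.det) := by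
  set r := √(‖M‖ ^ 2 + 2 * M.det)
  set p := M 0 0 + M 1 1
  set q := M 1 0 - M 0 1
  have hr : 0 < r := Real.sqrt_pos.mpr hM
  have hpq : p ^ 2 + q ^ 2 = r ^ 2 := by
    rw [Real.sq_sqrt hM.le, frobenius_norm_sq_fin_two, det_fin_two]
    ring
  have hunit : (p / r) ^ 2 + (q / r) ^ 2 = 1 := by
    field_simp
    exact hpq
  refine ⟨!![p / r, -(q / r); q / r, p / r], transpose_mul_self_rotation hunit, ?_, ?_⟩
  · rw [det_fin_two_of]
    linear_combination hunit
  · rw [frobenius_norm_sq_fin_two, frobenius_norm_sq_fin_two]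
    simp only [Matrix.sub_apply, of_apply, cons_val', cons_val_zero, cons_val_one,
      cons_val_fin_one, sub_neg_eq_add]
    field_simp
    linear_combination (2 - 2 * r) * hpq

theorem enorm3_sub_one_mulVec_e₃ {A : Matrix (Fin 3) (Fin 3) ℝ} (hA : ∑ i, A i 2 ^ 2 = 1) :
    enorm3 ((A - 1) *ᵥ e₃) = √(2 - 2 * A 2 2) := by
  rw [Fin.sum_univ_three] at hA
  rw [enorm3]
  congr 1
  simp only [mulVec, dotProduct, Matrix.sub_apply, one_apply, e₃, mul_ite, mul_one, mul_zero,
    Finset.sum_ite_eq', Finset.mem_univ, ↓reduceIte, Fin.sum_univ_three, Fin.reduceEq, sub_zero]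
  linear_combination hA

/-- if `R̂ ∈ SO(3)` satisfies `|(R̂ − Id)e₃| ≤ δ` with `δ` small, then
`|(R̂ − Id)ᵀe₃| ≤ Cδ` and there is `Q̂ ∈ SO(2)` with `|R̂' − Q̂| ≤ Cδ`, for a universal
constant `C`. -/
theorem stmt12 :
    ∃ C > (0:ℝ), ∃ δ₀ > (0:ℝ), ∀ δ : ℝ, 0 < δ → δ ≤ δ₀ →
      ∀ R : Matrix (Fin 3) (Fin 3) ℝ, Rᵀ * R = 1 → R.det = 1 →
        enorm3 ((R - 1).mulVec e₃) ≤ δ →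
        enorm3 ((R - 1)ᵀ.mulVec e₃) ≤ C * δ ∧
        ∃ Q : Matrix (Fin 2) (Fin 2) ℝ, Qᵀ * Q = 1 ∧ Q.det = 1 ∧
          ‖R.submatrix Fin.castSucc Fin.castSucc - Q‖ ≤ C * δ := by
  refine ⟨1, one_pos, 1, one_pos, fun δ _ hδ1 R hR hdet hclose => ?_⟩
  set t := R 2 2
  have hcol : enorm3 ((R - 1) *ᵥ e₃) = √(2 - 2 * t) :=
    enorm3_sub_one_mulVec_e₃ (sum_sq_col_eq_one hR 2)
  have hrow : enorm3 ((R - 1)ᵀ *ᵥ e₃) = √(2 - 2 * t) := by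
    rw [transpose_sub, transpose_one]
    exact enorm3_sub_one_mulVec_e₃ (sum_sq_row_eq_one hR 2)
  obtain ⟨hδ0, hsq⟩ := Real.sqrt_le_iff.mp (hcol ▸ hclose)
  have ht1 : t ≤ 1 := by
    have := sum_sq_col_eq_one hR 2
    rw [Fin.sum_univ_three] at this
    nlinarith
  have ht : 1 - t ≤ δ / 2 := by nlinarith
  set M := R.submatrix Fin.castSucc Fin.castSucc
  have hnorm : ‖M‖ ^ 2 + 1 = 2 + t ^ 2 := by
    exact_mod_cast frobenius_norm_sq_submatrix_castSucc hR
  have hdetM : M.det = t := det_submatrix_castSucc_eq_apply_last hR hdet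
  have hsum : ‖M‖ ^ 2 + 2 * M.det = (1 + t) ^ 2 := by
    rw [hdetM]; linear_combination hnorm
  obtain ⟨Q, hQ, hQdet, hdist⟩ := exists_rotation_norm_sub_sq M (by rw [hsum]; nlinarith)
  rw [hsum, Real.sqrt_sq (by linarith)] at hdist
  have hdist' : ‖M - Q‖ ^ 2 = (1 - t) ^ 2 := by linear_combination hdist + hnorm
  refine ⟨by rw [hrow, one_mul]; exact hcol ▸ hclose, Q, hQ, hQdet, ?_⟩
  rw [one_mul, ← pow_le_pow_iff_left₀ (norm_nonneg _) hδ0 two_ne_zero, hdist']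
  exact pow_le_pow_left₀ (by linarith) (by linarith) 2
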